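/- The set H(E) of hyperbolic invertible bounded linear operators on E is not dense (in the operator-norm topology) in the set GL(E) of invertible bounded linear operators on E: there exist an invertible bounded operator A₀ on E and ε > 0 such that no hyperbolic invertible bounded operator B satisfies ‖A₀ − B‖ < ε. (One may take A₀ = A, the multiplication operator (Af)(z) = z·f(z), and ε = 1/4.) -/

import Mathlib

noncomputable section

open Metric

/-- The closed disk of radius 1/2 centered at 1 in ℂ. -/
def K : Set ℂ := Metric.closedBall 1 (1/2)

instance : CompactSpace K :=
  isCompact_iff_compactSpace.mp (isCompact_closedBall 1 (1/2))

open scoped Classical in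
/-- Extension of a continuous function on K to ℂ by 0. -/
def extendFn (f : C(K, ℂ)) : ℂ → ℂ := fun z => if h : z ∈ K then f ⟨z, h⟩ else 0

/-- The subspace of C(K, ℂ) of functions holomorphic on the interior of K. -/
def Esub : Submodule ℂ C(K, ℂ) where
  carrier := {f | DifferentiableOn ℂ (extendFn f) (interior K)}
  add_mem' := by
    intro f g hf hg
    have h : extendFn (f + g) = extendFn f + extendFn g := by
      funext z; by_cases h : z ∈ K <;> simp [extendFn, h]
    simpa [Set.mem_setOf_eq, h] using hf.add hg
  zero_mem' := by
    have h : extendFn (0 : C(K, ℂ)) = fun _ => 0 := by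
      funext z; by_cases h : z ∈ K <;> simp [extendFn, h]
    simpa [Set.mem_setOf_eq, h] using differentiableOn_const (0 : ℂ)
  smul_mem' := by
    intro c f hf
    have h : extendFn (c • f) = c • extendFn f := by
      funext z; by_cases h : z ∈ K <;> simp [extendFn, h]
    simpa [Set.mem_setOf_eq, h] using hf.const_smul c

/-- The Banach space E. -/
abbrev E : Type := ↥Esub

/-- The constant function 1 as an element of E. -/
def oneE : E :=
  ⟨1, by
    have h : ∀ z ∈ interior K, extendFn (1 : C(K, ℂ)) z = 1 := by
      intro z hz; simp [extendFn, interior_subset hz]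
    exact (differentiableOn_const (1 : ℂ)).congr h⟩

/-- An invertible bounded operator is hyperbolic if its spectrum is disjoint
from the unit circle. -/
def Hyperbolic (T : E →L[ℂ] E) : Prop :=
  Disjoint (spectrum ℂ T) {z : ℂ | ‖z‖ = 1}

/-! Let `A` be multiplication by `z`. If `1 ∉ σ(B)`, put `f = (1 - B)⁻¹ 1`. Evaluating
`(A - B) f = (A - 1) f + 1` at the point `1`, where `(A - 1) f` vanishes, gives
`1 ≤ ‖A - B‖ ‖f‖`. On the other hand `|z - 1| = 1/2` on the boundary of `K`, so the maximum
modulus principle gives `‖f‖ ≤ 2 ‖(A - 1) f‖ ≤ 2 (‖A - B‖ ‖f‖ + 1)`. Together these force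
`‖A - B‖ ≥ 1/4`, while every hyperbolic `B` has `1 ∉ σ(B)`. -/

section

variable {𝕜 X : Type*} [NontriviallyNormedField 𝕜] [NormedAddCommGroup X] [NormedSpace 𝕜 X]

theorem one_le_two_mul_mul_norm_sub_of_one_notMem_spectrum {A : X →L[𝕜] X} {c : ℝ}
    (hA : ∀ f, ‖f‖ ≤ c * ‖A f - f‖) {φ : X →L[𝕜] 𝕜} (hφ : ‖φ‖ ≤ 1) (hφA : ∀ f, φ (A f) = φ f)
    {e : X} (he : ‖e‖ ≤ 1) (hφe : φ e = 1) {B : X →L[𝕜] X} (hB : (1 : 𝕜) ∉ spectrum 𝕜 B) :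
    1 ≤ 2 * c * ‖A - B‖ := by
  obtain ⟨u, hu⟩ : IsUnit (1 - B) := by simpa using spectrum.notMem_iff.mp hB
  set f := (↑u⁻¹ : X →L[𝕜] X) e
  have hf : f - B f = e := by
    have := congr($(u.mul_inv) e)
    rwa [hu] at this
  have h_eval : φ ((A - B) f) = 1 := by
    rw [sub_apply, map_sub, hφA, ← map_sub, hf, hφe]
  have h_lower : 1 ≤ ‖A - B‖ * ‖f‖ := calc
    1 = ‖φ ((A - B) f)‖ := by rw [h_eval, norm_one]
    _ ≤ ‖φ‖ * ‖(A - B) f‖ := φ.le_opNorm _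
    _ ≤ 1 * (‖A - B‖ * ‖f‖) := by gcongr; exact (A - B).le_opNorm f
    _ = ‖A - B‖ * ‖f‖ := one_mul _
  have hc : 0 < c := by
    have : 0 < ‖f‖ := by nlinarith [norm_nonneg (A - B), norm_nonneg f]
    nlinarith [hA f, norm_nonneg (A f - f)]
  have h_upper : ‖f‖ ≤ c * (‖A - B‖ * ‖f‖ + 1) := calc
    ‖f‖ ≤ c * ‖A f - f‖ := hA f
    _ = c * ‖(A - B) f - e‖ := by rw [← hf, sub_apply]; abel_nf
    _ ≤ c * (‖A - B‖ * ‖f‖ + 1) := by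
      gcongr
      exact (norm_sub_le _ _).trans (add_le_add ((A - B).le_opNorm f) he)
  rcases le_or_gt (c * ‖A - B‖) 1 with h | h
  · nlinarith [mul_le_mul_of_nonneg_left h_lower (sub_nonneg.mpr h), norm_nonneg (A - B)]
  · linarith

end

lemma one_mem_K : (1 : ℂ) ∈ K := mem_closedBall_self (by norm_num)

instance : Nonempty K := ⟨⟨1, one_mem_K⟩⟩

lemma ne_zero_of_mem_K {z : ℂ} (hz : z ∈ K) : z ≠ 0 := by
  rintro rfl
  have : dist (0 : ℂ) 1 ≤ 1 / 2 := hz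
  norm_num at this

lemma interior_K : interior K = ball 1 (1 / 2) := interior_closedBall 1 (by norm_num)

lemma extendFn_apply (f : C(K, ℂ)) (z : K) : extendFn f z = f z := dif_pos z.2

lemma mem_Esub_of_eq {f : C(K, ℂ)} {F : ℂ → ℂ} (hF : DifferentiableOn ℂ F (interior K))
    (hfF : ∀ z : K, f z = F z) : f ∈ Esub :=
  hF.congr fun z hz => (extendFn_apply f ⟨z, interior_subset hz⟩).trans (hfF _)

lemma mul_mem_Esub {f g : C(K, ℂ)} (hf : f ∈ Esub) (hg : g ∈ Esub) : f * g ∈ Esub :=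
  mem_Esub_of_eq (DifferentiableOn.mul hf hg) fun z => by simp [extendFn_apply]

def mulOp (g : C(K, ℂ)) (hg : g ∈ Esub) : E →L[ℂ] E :=
  ((ContinuousLinearMap.mul ℂ C(K, ℂ) g).comp Esub.subtypeL).codRestrict Esub
    fun f => mul_mem_Esub hg f.2

@[simp]
lemma coe_mulOp_apply (g : C(K, ℂ)) (hg : g ∈ Esub) (f : E) :
    (mulOp g hg f : C(K, ℂ)) = g * f := rfl

lemma mulOp_mul_mulOp {g h : C(K, ℂ)} (hg : g ∈ Esub) (hh : h ∈ Esub) (hgh : g * h = 1) :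
    mulOp g hg * mulOp h hh = 1 := by
  ext f : 2
  simp [← mul_assoc, hgh]

def coordK : C(K, ℂ) := ⟨(↑), continuous_subtype_val⟩

def coordInvK : C(K, ℂ) :=
  ⟨fun z => (z : ℂ)⁻¹, continuous_subtype_val.inv₀ fun z => ne_zero_of_mem_K z.2⟩

lemma coordK_mem : coordK ∈ Esub := mem_Esub_of_eq differentiableOn_id fun _ => rfl

lemma coordInvK_mem : coordInvK ∈ Esub :=
  mem_Esub_of_eq (differentiableOn_id.inv fun _ hz => ne_zero_of_mem_K (interior_subset hz))
    fun _ => rfl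

def mulCoord : E →L[ℂ] E := mulOp coordK coordK_mem

lemma isUnit_mulCoord : IsUnit mulCoord := by
  have hK (z : K) : (z : ℂ) ≠ 0 := ne_zero_of_mem_K z.2
  refine ⟨⟨mulCoord, mulOp coordInvK coordInvK_mem, mulOp_mul_mulOp _ _ ?_,
    mulOp_mul_mulOp _ _ ?_⟩, rfl⟩ <;> ext z <;> simp [coordK, coordInvK, hK z]

lemma diffContOnCl_extendFn (f : E) : DiffContOnCl ℂ (extendFn f) (ball 1 (1 / 2)) where
  differentiableOn := interior_K ▸ f.2
  continuousOn := by
    rw [closure_ball 1 (by norm_num), continuousOn_iff_continuous_domRestrict]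
    exact (funext (extendFn_apply f) : K.domRestrict (extendFn f) = f) ▸ f.1.continuous

lemma norm_le_of_forall_norm_sub_one_eq (f : E) {M : ℝ}
    (hM : ∀ z : K, ‖(z : ℂ) - 1‖ = 1 / 2 → ‖(f : C(K, ℂ)) z‖ ≤ M) : ‖f‖ ≤ M := by
  refine (ContinuousMap.norm_le_of_nonempty (f : C(K, ℂ))).mpr fun z => ?_
  have hK : closure (ball (1 : ℂ) (1 / 2)) = K := closure_ball 1 (by norm_num)
  have h_frontier : ∀ w ∈ frontier (ball (1 : ℂ) (1 / 2)), ‖extendFn f w‖ ≤ M := by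
    intro w hw
    rw [frontier_ball 1 (by norm_num)] at hw
    have hwK : w ∈ K := sphere_subset_closedBall hw
    rw [show extendFn f w = (f : C(K, ℂ)) ⟨w, hwK⟩ from extendFn_apply f ⟨w, hwK⟩]
    exact hM ⟨w, hwK⟩ (mem_sphere_iff_norm.mp hw)
  have := Complex.norm_le_of_forall_mem_frontier_norm_le isBounded_ball (diffContOnCl_extendFn f)
    h_frontier (by rw [hK]; exact z.2)
  rwa [extendFn_apply] at this

lemma norm_le_two_mul_norm_mulCoord_sub (f : E) : ‖f‖ ≤ 2 * ‖mulCoord f - f‖ := by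
  refine norm_le_of_forall_norm_sub_one_eq f fun z hz => ?_
  have h_apply : ((mulCoord f - f : E) : C(K, ℂ)) z = ((z : ℂ) - 1) * (f : C(K, ℂ)) z := by
    change (z : ℂ) * (f : C(K, ℂ)) z - (f : C(K, ℂ)) z = _
    ring
  have := ((mulCoord f - f : E) : C(K, ℂ)).norm_coe_le_norm z
  rw [h_apply, norm_mul, hz] at this
  rw [Submodule.coe_norm]
  linarith

def evalE (z : K) : E →L[ℂ] ℂ := (ContinuousMap.evalCLM ℂ z).comp Esub.subtypeL

lemma norm_evalE_le (z : K) : ‖evalE z‖ ≤ 1 :=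
  ContinuousLinearMap.opNorm_le_bound _ zero_le_one fun f => by
    rw [one_mul]
    exact (f : C(K, ℂ)).norm_coe_le_norm z

lemma evalE_mulCoord (z : K) (f : E) : evalE z (mulCoord f) = z * evalE z f := rfl

lemma evalE_oneE (z : K) : evalE z oneE = 1 := rfl

lemma norm_oneE : ‖oneE‖ = 1 := norm_one (α := C(K, ℂ))

/-- Hyperbolic invertible operators are not dense in the invertible operators on E:
there are an invertible A₀ and ε > 0 such that no hyperbolic invertible B
satisfies ‖A₀ − B‖ < ε. -/
theorem hyperbolic_not_dense :
    ∃ A₀ : E →L[ℂ] E, IsUnit A₀ ∧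
      ∃ ε : ℝ, 0 < ε ∧
        ∀ B : E →L[ℂ] E, IsUnit B → Hyperbolic B → ¬ ‖A₀ - B‖ < ε := by
  refine ⟨mulCoord, isUnit_mulCoord, 1 / 4, by norm_num, fun B _ hB hlt => ?_⟩
  have h_one : (1 : ℂ) ∉ spectrum ℂ B := fun h => Set.disjoint_left.mp hB h (by simp)
  have := one_le_two_mul_mul_norm_sub_of_one_notMem_spectrum norm_le_two_mul_norm_mulCoord_sub
    (norm_evalE_le ⟨1, one_mem_K⟩) (fun f => (evalE_mulCoord _ f).trans (one_mul _))
    norm_oneE.le (evalE_oneE _) h_one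
  linarith

end
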